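/- arXiv:2510.02756 — 5 statements merged into one kernel-verified Lean document; each statement's English description precedes it below -/
import Mathlib

section
/- There exists a group isomorphism between the symmetric group S₆ on six letters and the symplectic group Sp₄(F₂) of 4×4 matrices over the field with two elements preserving the standard nondegenerate alternating bilinear form. (In particular GSp₄(F₂) = Sp₄(F₂) is isomorphic to S₆, the identification used to analyse the mod-2 Galois representation of the Jacobian of a genus two curve via its Weierstrass points.) -/
/-!
`S₆` permutes the coordinates of `𝔽₂⁶`, preserving the dot product, the hyperplane
`W = {x | ∑ x = 0}` and the line `⟨𝟙⟩ ⊆ W`, which is the radical of the dot product on `W`.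
So `S₆` acts on the 4-dimensional symplectic space `W/⟨𝟙⟩`; in a symplectic basis this is a
homomorphism `S₆ → Sp₄(𝔽₂)`. Its kernel is a normal subgroup of `S₆` without 3-cycles, hence
trivial, and enumerating the symplectic frames of `𝔽₂⁴` shows `|Sp₄(𝔽₂)| ≤ 720 = |S₆|`.
-/

open Matrix Equiv

namespace Matrix

def allOnes (n R : Type*) [One R] : Matrix n n R := of fun _ _ => 1

theorem commute_permMatrix_allOnes {n R : Type*} [Fintype n] [DecidableEq n]
    [NonAssocSemiring R] (σ : Perm n) : Commute (σ.permMatrix R) (allOnes n R) := by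
  rw [Commute, SemiconjBy, PEquiv.toMatrix_toPEquiv_mul, PEquiv.mul_toMatrix_toPEquiv]
  rfl

theorem transpose_permMatrix_mul_self {n R : Type*} [Fintype n] [DecidableEq n]
    [NonAssocSemiring R] (σ : Perm n) : (σ.permMatrix R)ᵀ * σ.permMatrix R = 1 := by
  rw [transpose_permMatrix, ← permMatrix_mul, mul_inv_cancel, permMatrix_one]

/- `Q * P` is the identity up to matrices that `P` kills from the left or `Q` from the right,
so `A ↦ P * A * Q` is multiplicative on the matrices commuting with `O`. -/
theorem mul_mul_mul_mul_eq_of_commute {m n R : Type*} [Fintype m] [Fintype n] [DecidableEq n]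
    [Semiring R] {P : Matrix m n R} {Q : Matrix n m R} {O C D A B : Matrix n n R}
    (hQP : Q * P = 1 + O * C + D * O) (hPO : P * O = 0) (hOQ : O * Q = 0)
    (hA : Commute A O) (hB : Commute B O) :
    P * A * Q * (P * B * Q) = P * (A * B) * Q := by
  have hPAO : P * A * O = 0 := by
    rw [Matrix.mul_assoc, hA.eq, ← Matrix.mul_assoc, hPO, Matrix.zero_mul]
  have hOBQ : O * B * Q = 0 := by rw [← hB.eq, Matrix.mul_assoc, hOQ, Matrix.mul_zero]
  calc P * A * Q * (P * B * Q) = P * A * (Q * P) * B * Q := by simp only [Matrix.mul_assoc]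
    _ = P * (A * B) * Q + P * A * O * (C * B * Q) + P * A * D * (O * B * Q) := by
      rw [hQP]
      simp only [Matrix.mul_add, Matrix.add_mul, Matrix.mul_one, Matrix.mul_assoc]
    _ = P * (A * B) * Q := by rw [hPAO, hOBQ]; simp

theorem transpose_mul_mul_mul_eq_of_commute {m n R : Type*} [Fintype n] [DecidableEq n]
    [CommSemiring R] {Q : Matrix n m R} {O C D A : Matrix n n R}
    (hO : Oᵀ = O) (hOQ : O * Q = 0) (hA : Commute A O) (hAA : Aᵀ * A = 1) :
    (A * Q)ᵀ * (1 + O * C + D * O) * (A * Q) = Qᵀ * Q := by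
  have hOAQ : O * (A * Q) = 0 := by
    rw [← Matrix.mul_assoc, ← hA.eq, Matrix.mul_assoc, hOQ, Matrix.mul_zero]
  have hAQO : (A * Q)ᵀ * O = 0 := by
    rw [← transpose_transpose ((A * Q)ᵀ * O), transpose_mul, hO, transpose_transpose, hOAQ,
      transpose_zero]
  calc (A * Q)ᵀ * (1 + O * C + D * O) * (A * Q)
      = Qᵀ * (Aᵀ * A) * Q + (A * Q)ᵀ * O * (C * (A * Q)) + (A * Q)ᵀ * D * (O * (A * Q)) := by
        simp only [transpose_mul, Matrix.mul_add, Matrix.add_mul, Matrix.mul_one,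
          Matrix.mul_assoc]
    _ = Qᵀ * Q := by rw [hAA, hAQO, hOAQ]; simp

theorem mul_mul_transpose_apply {l R : Type*} [Fintype l] [NonUnitalSemiring R]
    (A B : Matrix l l R) (i j : l) : (A * B * Aᵀ) i j = A i ⬝ᵥ B *ᵥ A j := by
  rw [dotProduct_mulVec, mul_apply']
  rfl

end Matrix

namespace PermFinSix

/- The columns `e₀ + e₁, e₃ + e₄; e₁ + e₂, e₄ + e₅` form a symplectic basis of `W/⟨𝟙⟩`, where
`W = {x ∈ 𝔽₂⁶ | ∑ x = 0}` carries the dot product. -/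
def basisMatrix : Matrix (Fin 6) (Fin 2 ⊕ Fin 2) (ZMod 2) :=
  (of (Sum.elim ![![1, 1, 0, 0, 0, 0], ![0, 0, 0, 1, 1, 0]]
    ![![0, 1, 1, 0, 0, 0], ![0, 0, 0, 0, 1, 1]]))ᵀ

/- Coordinates in that basis, since `basisMatrixᵀ * basisMatrix = J` and `J⁻¹ = J` over `𝔽₂`. -/
def coordMatrix : Matrix (Fin 2 ⊕ Fin 2) (Fin 6) (ZMod 2) := J (Fin 2) (ZMod 2) * basisMatrixᵀ

theorem transpose_basisMatrix_mul_self : basisMatrixᵀ * basisMatrix = J (Fin 2) (ZMod 2) := by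
  decide

theorem allOnes_mul_basisMatrix : allOnes (Fin 6) (ZMod 2) * basisMatrix = 0 := by decide

theorem coordMatrix_mul_allOnes : coordMatrix * allOnes (Fin 6) (ZMod 2) = 0 := by decide

/- On `W` the projection `basisMatrix * coordMatrix` is the identity modulo `𝟙`. -/
theorem basisMatrix_mul_coordMatrix :
    basisMatrix * coordMatrix = 1 + allOnes (Fin 6) (ZMod 2) * diagonal ![0, 0, 0, 1, 1, 1]
      + diagonal ![1, 1, 1, 0, 0, 0] * allOnes (Fin 6) (ZMod 2) := by
  decide

theorem transpose_coordMatrix_mul_J_mul_self :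
    coordMatrixᵀ * J (Fin 2) (ZMod 2) * coordMatrix = basisMatrix * coordMatrix := by
  decide

def toMatrix : Perm (Fin 6) →* Matrix (Fin 2 ⊕ Fin 2) (Fin 2 ⊕ Fin 2) (ZMod 2) where
  toFun σ := coordMatrix * σ⁻¹.permMatrix (ZMod 2) * basisMatrix
  map_one' := by
    rw [inv_one, permMatrix_one, Matrix.mul_one, coordMatrix, Matrix.mul_assoc,
      transpose_basisMatrix_mul_self]
    decide
  map_mul' σ τ := by
    rw [_root_.mul_inv_rev, permMatrix_mul]
    exact (mul_mul_mul_mul_eq_of_commute basisMatrix_mul_coordMatrix coordMatrix_mul_allOnes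
      allOnes_mul_basisMatrix (commute_permMatrix_allOnes _) (commute_permMatrix_allOnes _)).symm

theorem toMatrix_mem_symplecticGroup (σ : Perm (Fin 6)) :
    toMatrix σ ∈ symplecticGroup (Fin 2) (ZMod 2) := by
  rw [SymplecticGroup.mem_iff']
  calc (toMatrix σ)ᵀ * J (Fin 2) (ZMod 2) * toMatrix σ
      = (σ⁻¹.permMatrix (ZMod 2) * basisMatrix)ᵀ
          * (coordMatrixᵀ * J (Fin 2) (ZMod 2) * coordMatrix)
          * (σ⁻¹.permMatrix (ZMod 2) * basisMatrix) := by
        simp only [toMatrix, MonoidHom.coe_mk, OneHom.coe_mk, transpose_mul, Matrix.mul_assoc]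
    _ = basisMatrixᵀ * basisMatrix := by
        rw [transpose_coordMatrix_mul_J_mul_self, basisMatrix_mul_coordMatrix]
        exact transpose_mul_mul_mul_eq_of_commute rfl allOnes_mul_basisMatrix
          (commute_permMatrix_allOnes _) (transpose_permMatrix_mul_self _)
    _ = J (Fin 2) (ZMod 2) := transpose_basisMatrix_mul_self

def toSymplecticGroup : Perm (Fin 6) →* symplecticGroup (Fin 2) (ZMod 2) :=
  toMatrix.codRestrict _ toMatrix_mem_symplecticGroup

theorem swap_mul_swap_mem_alternatingGroup :
    swap (0 : Fin 6) 1 * swap 1 2 ∈ alternatingGroup (Fin 6) := by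
  simp [Perm.mem_alternatingGroup]

theorem toMatrix_swap_mul_swap_ne_one : toMatrix (swap 0 1 * swap 1 2) ≠ 1 := by
  decide +kernel

theorem toSymplecticGroup_injective : Function.Injective toSymplecticGroup := by
  rw [← MonoidHom.ker_eq_bot_iff]
  by_contra hker
  have hle := Perm.alternatingGroup_le_of_normal (by simp)
    ((Subgroup.nontrivial_iff_ne_bot _).mpr hker)
  exact toMatrix_swap_mul_swap_ne_one
    (congrArg Subtype.val (hle swap_mul_swap_mem_alternatingGroup))

def vectors : List (Fin 2 ⊕ Fin 2 → ZMod 2) :=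
  [0, 1].flatMap fun a => [0, 1].flatMap fun b => [0, 1].flatMap fun c => [0, 1].map fun d =>
    Sum.elim ![a, b] ![c, d]

theorem mem_vectors (v : Fin 2 ⊕ Fin 2 → ZMod 2) : v ∈ vectors := by
  revert v
  decide

/- The matrices with rows `r₀, r₁; r₂, r₃` satisfying `rᵢ ⬝ᵥ J *ᵥ rⱼ = Jᵢⱼ`, listed by choosing
a hyperbolic pair `(r₀, r₂)` and then a hyperbolic pair `(r₁, r₃)` orthogonal to it. -/
def symplecticFrames : List (Matrix (Fin 2 ⊕ Fin 2) (Fin 2 ⊕ Fin 2) (ZMod 2)) :=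
  let ω (v w : Fin 2 ⊕ Fin 2 → ZMod 2) := v ⬝ᵥ J (Fin 2) (ZMod 2) *ᵥ w
  vectors.flatMap fun r₀ => (vectors.filter (ω r₀ · = 1)).flatMap fun r₂ =>
    (vectors.filter fun r₁ => ω r₀ r₁ = 0 ∧ ω r₂ r₁ = 0).flatMap fun r₁ =>
      (vectors.filter fun r₃ => ω r₁ r₃ = 1 ∧ ω r₀ r₃ = 0 ∧ ω r₂ r₃ = 0).map fun r₃ =>
        of (Sum.elim ![r₀, r₁] ![r₂, r₃])

theorem length_symplecticFrames : symplecticFrames.length = 720 := by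
  decide +kernel

theorem mem_symplecticFrames {A : Matrix (Fin 2 ⊕ Fin 2) (Fin 2 ⊕ Fin 2) (ZMod 2)}
    (hA : A ∈ symplecticGroup (Fin 2) (ZMod 2)) : A ∈ symplecticFrames := by
  have hω (i j) : A i ⬝ᵥ J (Fin 2) (ZMod 2) *ᵥ A j = J (Fin 2) (ZMod 2) i j := by
    rw [← mul_mul_transpose_apply, SymplecticGroup.mem_iff.mp hA]
  simp only [symplecticFrames, List.mem_flatMap, List.mem_filter, List.mem_map,
    decide_eq_true_eq]
  refine ⟨A (.inl 0), mem_vectors _, A (.inr 0), ⟨mem_vectors _, ?_⟩, A (.inl 1),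
    ⟨mem_vectors _, ?_, ?_⟩, A (.inr 1), ⟨mem_vectors _, ?_, ?_, ?_⟩, ?_⟩
  rotate_right
  · ext (i | i) j <;> fin_cases i <;> rfl
  all_goals rw [hω]; decide

theorem card_symplecticGroup_le : Nat.card (symplecticGroup (Fin 2) (ZMod 2)) ≤ 720 := by
  rw [← length_symplecticFrames, ← SetLike.coe_sort_coe, Nat.card_coe_set_eq]
  calc _ ≤ (symplecticFrames.toFinset : Set _).ncard :=
        Set.ncard_le_ncard fun A hA => List.mem_toFinset.mpr (mem_symplecticFrames hA)
    _ ≤ _ := by rw [Set.ncard_coe_finset]; exact List.toFinset_card_le _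

end PermFinSix

/-- There is a group isomorphism between the symmetric group `S₆` on six letters and the
symplectic group `Sp₄(𝔽₂)` of `4 × 4` matrices over the field with two elements preserving
the standard nondegenerate alternating bilinear form. -/
theorem stmt0 :
    Nonempty (Equiv.Perm (Fin 6) ≃* Matrix.symplecticGroup (Fin 2) (ZMod 2)) := by
  have hcard : Nat.card (symplecticGroup (Fin 2) (ZMod 2)) ≤ Nat.card (Perm (Fin 6)) := by
    rw [Nat.card_perm, Nat.card_fin]
    exact PermFinSix.card_symplecticGroup_le
  exact ⟨MulEquiv.ofBijective _
    (PermFinSix.toSymplecticGroup_injective.bijective_of_nat_card_le hcard)⟩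
end

section
/- There exists a group isomorphism between SL₂(F₄), the special linear group of 2×2 matrices of determinant 1 over the field with four elements, and the alternating group A₅ on five letters. -/
/-!
`SL₂(F₄)` acts on the projective line `ℙ¹(F₄)`, which has `4 + 1 = 5` points. The kernel of this
action consists of the scalar matrices of determinant one, i.e. `r • 1` with `r² = 1`, and in
characteristic two this forces `r = 1`: the action is faithful. Since
`|SL₂(F₄)| = |GL₂(F₄)| / 3 = 60`, the image is a subgroup of index two in `S₅`, hence equal to `A₅`.
-/

open Matrix Projectivization
open scoped LinearAlgebra.Projectivization

namespace Matrix.SpecialLinearGroup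

variable {n R : Type*} [Fintype n] [DecidableEq n] [CommRing R]

lemma toGL_range_eq_det_ker : (toGL : SpecialLinearGroup n R →* GL n R).range =
    GeneralLinearGroup.det.ker := by
  ext A
  rw [MonoidHom.mem_ker, Units.ext_iff, GeneralLinearGroup.val_det_apply, Units.val_one]
  refine ⟨?_, fun hA => ⟨⟨A, hA⟩, Units.ext rfl⟩⟩
  rintro ⟨g, rfl⟩
  exact g.2

lemma card_mul_card_units [Nonempty n] [Finite R] :
    Nat.card (SpecialLinearGroup n R) * Nat.card Rˣ = Nat.card (GL n R) := by
  rw [← (GeneralLinearGroup.det (n := n) (R := R)).ker.card_mul_index, Subgroup.index_ker,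
    MonoidHom.range_eq_top_of_surjective _ GeneralLinearGroup.det_surjective,
    Subgroup.card_top, ← toGL_range_eq_det_ker,
    ← Nat.card_congr (MonoidHom.ofInjective toGL_injective).toEquiv]

lemma center_eq_bot_of_charTwo [NoZeroDivisors R] [CharP R 2] :
    Subgroup.center (SpecialLinearGroup (Fin 2) R) = ⊥ := by
  refine Subgroup.eq_bot_iff_forall _ |>.2 fun A hA => ?_
  obtain ⟨r, hr, hrA⟩ := mem_center_iff.1 hA
  rw [Fintype.card_fin, ← one_pow 2, CharTwo.sq_inj] at hr
  ext : 1
  simp [← hrA, hr]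

end Matrix.SpecialLinearGroup

lemma Projectivization.injective_toPermHom_specialLinearGroup_of_charTwo
    {K : Type*} [Field K] [CharP K 2] :
    Function.Injective (MulAction.toPermHom (SpecialLinearGroup (Fin 2) K) (ℙ K (Fin 2 → K))) := by
  rw [← MonoidHom.ker_eq_bot_iff, SL_mulAction_ker, SpecialLinearGroup.center_eq_bot_of_charTwo]

lemma Equiv.Perm.nonempty_mulEquiv_alternatingGroup_of_injective {G α : Type*} [Group G]
    [Fintype α] [DecidableEq α] {φ : G →* Perm α} (hφ : Function.Injective φ)
    (hcard : 2 * Nat.card G = Nat.card (Perm α)) : Nonempty (G ≃* alternatingGroup α) := by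
  have hindex : φ.range.index = 2 := by
    have hpos : 0 < Nat.card G := by have := Nat.card_pos (α := Perm α); omega
    have h := φ.range.card_mul_index
    rw [← Nat.card_congr (MonoidHom.ofInjective hφ).toEquiv, ← hcard, mul_comm 2] at h
    exact Nat.eq_of_mul_eq_mul_left hpos h
  exact ⟨(MonoidHom.ofInjective hφ).trans
    (MulEquiv.subgroupCongr (eq_alternatingGroup_of_index_eq_two hindex))⟩

/-- There is a group isomorphism between `SL₂(𝔽₄)`, the special linear group of `2 × 2`
matrices of determinant `1` over the field with four elements, and the alternating group
`A₅` on five letters. -/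
theorem stmt3 :
    Nonempty (Matrix.SpecialLinearGroup (Fin 2) (GaloisField 2 2) ≃* alternatingGroup (Fin 5)) := by
  set F := GaloisField 2 2
  have hF : Nat.card F = 4 := GaloisField.card 2 2 two_ne_zero
  have hSL : Nat.card (SpecialLinearGroup (Fin 2) F) = 60 := by
    let := Fintype.ofFinite F
    have := SpecialLinearGroup.card_mul_card_units (n := Fin 2) (R := F)
    rw [card_GL_field, Nat.card_units, ← Nat.card_eq_fintype_card, hF] at this
    norm_num [Fin.prod_univ_two] at this
    omega
  have hP : Nat.card (ℙ F (Fin 2 → F)) = 5 := by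
    rw [card_of_finrank_two F _ (by simp), hF]
  let e := Finite.equivFinOfCardEq hP
  refine Equiv.Perm.nonempty_mulEquiv_alternatingGroup_of_injective
    (φ := e.permCongrHom.toMonoidHom.comp (MulAction.toPermHom _ _))
    (e.permCongrHom.injective.comp injective_toPermHom_specialLinearGroup_of_charTwo) ?_
  rw [hSL, Nat.card_perm, Nat.card_fin]
  rfl
end

section
/- Every subgroup H of the symmetric group S₆ that is isomorphic (as an abstract group) to the symmetric group S₅ either fixes a point of {1,…,6} (and is then the full stabilizer of that point) or acts transitively on {1,…,6}; moreover both cases occur, i.e. there exist both a point-stabilizer subgroup isomorphic to S₅ and a transitive subgroup of S₆ isomorphic to S₅. -/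
/-!
An intransitive subgroup `H ≤ Perm α` preserves a proper nonempty orbit `s`, hence embeds in
`Perm s × Perm sᶜ`. If `|s|, |sᶜ| ≥ 2` this forces `|H| ≤ |s|! |sᶜ|! < (|α| - 1)!`, so a subgroup
of order `(|α| - 1)!` that is not transitive has an orbit or co-orbit of size one, i.e. a fixed
point, and is then the whole point stabilizer by counting.

Point stabilizers give the standard copies of `S₅` in `S₆`. For the exotic transitive copy,
`S₅` acts by conjugation on its Sylow `5`-subgroups. There are six of them: their number divides
`24`, is `1` mod `5`, and is not `1`, since a nontrivial normal subgroup of `S₅` contains `A₅`.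
The kernel of the action is a normal subgroup inside a normalizer of order `20`, so it cannot
contain `A₅` and must be trivial.
-/

open Equiv MulAction
open scoped Nat Pointwise

theorem Nat.factorial_mul_factorial_lt_factorial {a b : ℕ} (ha : 2 ≤ a) (hb : 2 ≤ b) :
    a ! * b ! < (a + b - 1)! := by
  induction b, hb using Nat.le_induction with
  | base =>
    rw [show a + 2 - 1 = a + 1 by omega, Nat.factorial_two, Nat.factorial_succ a, mul_comm (a + 1)]
    exact Nat.mul_lt_mul_of_pos_left (by omega) (Nat.factorial_pos a)
  | succ b hb ih =>
    rw [show a + (b + 1) - 1 = (a + b - 1) + 1 by omega, Nat.factorial_succ, Nat.factorial_succ]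
    calc a ! * ((b + 1) * b !) = (b + 1) * (a ! * b !) := by ring
      _ < (a + b - 1 + 1) * (a + b - 1)! := Nat.mul_lt_mul_of_le_of_lt (by omega) ih (by omega)

theorem MulAction.le_stabilizer_orbit {G α : Type*} [Group G] [MulAction G α]
    (H : Subgroup G) (a : α) : H ≤ stabilizer G (orbit H a) := by
  intro g hg
  rw [mem_stabilizer_set]
  intro b
  change (⟨g, hg⟩ : H) • b ∈ orbit H a ↔ _
  rw [← orbit_eq_iff, orbit_smul, orbit_eq_iff]

theorem MulAction.exists_transitive_subgroup_perm_mulEquiv {G X Y : Type*} [Group G]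
    [MulAction G X] [FaithfulSMul G X] [IsPretransitive G X] (e : X ≃ Y) :
    ∃ H : Subgroup (Perm Y), Nonempty (H ≃* G) ∧ ∀ a b : Y, ∃ h ∈ H, h a = b := by
  let ρ : G →* Perm Y := e.permCongrHom.toMonoidHom.comp (toPermHom G X)
  have hρ : Function.Injective ρ :=
    e.permCongrHom.injective.comp (toPerm_injective (α := G) (β := X))
  refine ⟨ρ.range, ⟨(MonoidHom.ofInjective hρ).symm⟩, fun a b => ?_⟩
  obtain ⟨g, hg⟩ := exists_smul_eq G (e.symm a) (e.symm b)
  exact ⟨ρ g, ⟨g, rfl⟩, by simp [ρ, permCongr_apply, hg]⟩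

namespace Equiv.Perm

variable {α : Type*}

theorem stabilizer_set_le_range_subtypeCongrHom (s : Set α) [DecidablePred (· ∈ s)] :
    stabilizer (Perm α) s ≤ (subtypeCongrHom (· ∈ s)).range := by
  intro g hg
  rw [mem_stabilizer_set] at hg
  refine ⟨(g.subtypePerm fun x => hg x, g.subtypePerm fun x => not_congr (hg x)), ?_⟩
  ext x
  by_cases hx : x ∈ s <;> simp [hx]

theorem nat_card_stabilizer_set_le [Finite α] (s : Set α) :
    Nat.card (stabilizer (Perm α) s) ≤ s.ncard ! * sᶜ.ncard ! := by
  classical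
  calc Nat.card (stabilizer (Perm α) s)
      ≤ Nat.card (subtypeCongrHom (· ∈ s)).range :=
        Subgroup.card_le_of_le (stabilizer_set_le_range_subtypeCongrHom s)
    _ = Nat.card (Perm s × Perm ↥sᶜ) :=
        Nat.card_congr (MonoidHom.ofInjective (subtypeCongrHom_injective _)).toEquiv.symm
    _ = s.ncard ! * sᶜ.ncard ! := by
        rw [Nat.card_prod, Nat.card_perm, Nat.card_perm, Nat.card_coe_set_eq,
          Nat.card_coe_set_eq]

theorem nat_card_lt_of_le_stabilizer_set [Finite α] {H : Subgroup (Perm α)} {s : Set α}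
    (hH : H ≤ stabilizer (Perm α) s) (hs : 2 ≤ s.ncard) (hsc : 2 ≤ sᶜ.ncard) :
    Nat.card H < (Nat.card α - 1)! :=
  calc Nat.card H ≤ s.ncard ! * sᶜ.ncard ! :=
        (Subgroup.card_le_of_le hH).trans (nat_card_stabilizer_set_le s)
    _ < (s.ncard + sᶜ.ncard - 1)! := Nat.factorial_mul_factorial_lt_factorial hs hsc
    _ = (Nat.card α - 1)! := by rw [Set.ncard_add_ncard_compl]

variable [Fintype α] [DecidableEq α]

theorem stabilizer_eq_range_ofSubtype (a : α) :
    stabilizer (Perm α) a = (ofSubtype : Perm {x // x ≠ a} →* Perm α).range := by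
  ext g
  rw [mem_range_ofSubtype_iff, mem_stabilizer_iff, Perm.smul_def]
  constructor
  · rintro h x hx rfl
    exact mem_support.mp hx h
  · intro h
    by_contra hne
    exact h (mem_support.mpr hne) rfl

noncomputable def stabilizerMulEquiv (a : α) : stabilizer (Perm α) a ≃* Perm {x // x ≠ a} :=
  (MulEquiv.subgroupCongr (stabilizer_eq_range_ofSubtype a)).trans
    (MonoidHom.ofInjective ofSubtype_injective).symm

theorem nat_card_stabilizer (a : α) :
    Nat.card (stabilizer (Perm α) a) = (Nat.card α - 1)! := by
  rw [Nat.card_congr (stabilizerMulEquiv a).toEquiv, Nat.card_perm]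
  simp

theorem exists_eq_stabilizer_or_isPretransitive {H : Subgroup (Perm α)}
    (hH : Nat.card H = (Nat.card α - 1)!) :
    (∃ a : α, H = stabilizer (Perm α) a) ∨ IsPretransitive H α := by
  rw [or_iff_not_imp_right]
  intro hntrans
  obtain ⟨a, b, hb⟩ : ∃ a b : α, b ∉ orbit H a := by
    by_contra! h
    exact hntrans ⟨fun a b => mem_orbit_iff.mp (h a b)⟩
  suffices ∃ c : α, H ≤ stabilizer (Perm α) c by
    obtain ⟨c, hc⟩ := this
    exact ⟨c, Subgroup.eq_of_le_of_card_ge hc (by rw [nat_card_stabilizer, hH])⟩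
  have of_ncard_eq_one {t : Set α} (ht : H ≤ stabilizer (Perm α) t) (h1 : t.ncard = 1) :
      ∃ c : α, H ≤ stabilizer (Perm α) c := by
    obtain ⟨c, rfl⟩ := Set.ncard_eq_one.mp h1
    exact ⟨c, stabilizer_singleton (G := Perm α) c ▸ ht⟩
  have hs := le_stabilizer_orbit H a
  have hsc : H ≤ stabilizer (Perm α) (orbit H a)ᶜ := by rwa [stabilizer_compl]
  have hpos : 0 < (orbit H a).ncard := (Set.ncard_pos).mpr ⟨a, mem_orbit_self a⟩
  have hpos' : 0 < (orbit H a)ᶜ.ncard := (Set.ncard_pos).mpr ⟨b, hb⟩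
  by_cases h1 : (orbit H a).ncard = 1
  · exact of_ncard_eq_one hs h1
  by_cases h1' : (orbit H a)ᶜ.ncard = 1
  · exact of_ncard_eq_one hsc h1'
  exact absurd hH (nat_card_lt_of_le_stabilizer_set hs (by omega) (by omega)).ne

theorem eq_bot_of_normal_of_nat_card_lt (hα : 5 ≤ Nat.card α) {N : Subgroup (Perm α)} [N.Normal]
    (hN : Nat.card N < Nat.card (alternatingGroup α)) : N = ⊥ := by
  by_contra hne
  have hle := alternatingGroup_le_of_normal hα ((Subgroup.nontrivial_iff_ne_bot N).mpr hne)
  exact (Subgroup.card_le_of_le hle).not_gt hN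

theorem faithfulSMul_of_nat_card_stabilizer_lt {X : Type*} [MulAction (Perm α) X]
    (hα : 5 ≤ Nat.card α) (x : X)
    (hx : Nat.card (stabilizer (Perm α) x) < Nat.card (alternatingGroup α)) :
    FaithfulSMul (Perm α) X := by
  have hker_le : (toPermHom (Perm α) X).ker ≤ stabilizer (Perm α) x := fun g hg =>
    congr($hg x)
  have hker := eq_bot_of_normal_of_nat_card_lt hα ((Subgroup.card_le_of_le hker_le).trans_lt hx)
  rw [faithfulSMul_iff]
  intro g hg
  rw [← Subgroup.mem_bot, ← hker, MonoidHom.mem_ker]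
  exact Equiv.ext hg

end Equiv.Perm

instance Nat.fact_prime_five : Fact (Nat.Prime 5) := ⟨Nat.prime_five⟩

theorem nat_card_perm_fin_five : Nat.card (Perm (Fin 5)) = 120 := by
  rw [Nat.card_perm, Nat.card_fin]
  rfl

theorem nat_card_alternatingGroup_fin_five : Nat.card (alternatingGroup (Fin 5)) = 60 := by
  rw [nat_card_alternatingGroup, Nat.card_fin]
  rfl

theorem Sylow.nat_card_eq_five_of_perm_fin_five (P : Sylow 5 (Perm (Fin 5))) : Nat.card P = 5 := by
  rw [P.card_eq_multiplicity, nat_card_perm_fin_five, show 120 = 5 * 24 by rfl,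
    Nat.factorization_mul_apply_of_coprime (by decide), Nat.prime_five.factorization_self,
    Nat.factorization_eq_zero_of_not_dvd (by decide)]
  rfl

theorem nat_card_sylow_five_perm_fin_five : Nat.card (Sylow 5 (Perm (Fin 5))) = 6 := by
  let P : Sylow 5 (Perm (Fin 5)) := default
  have hP := P.nat_card_eq_five_of_perm_fin_five
  have hindex : P.index = 24 := by
    have := (P : Subgroup (Perm (Fin 5))).index_mul_card
    rw [hP, nat_card_perm_fin_five] at this
    omega
  have hne : Nat.card (Sylow 5 (Perm (Fin 5))) ≠ 1 := by
    intro h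
    have : Subsingleton (Sylow 5 (Perm (Fin 5))) := (Nat.card_eq_one_iff_unique.mp h).1
    have := P.normal_of_subsingleton
    have hbot : (P : Subgroup (Perm (Fin 5))) = ⊥ :=
      Perm.eq_bot_of_normal_of_nat_card_lt (by simp)
        (by rw [hP, nat_card_alternatingGroup_fin_five]; decide)
    rw [hbot, Subgroup.card_bot] at hP
    omega
  have hmod := card_sylow_modEq_one 5 (Perm (Fin 5))
  have hdvd := hindex ▸ P.card_dvd_index
  have hle := Nat.le_of_dvd (by decide) hdvd
  unfold Nat.ModEq at hmod
  interval_cases h : Nat.card (Sylow 5 (Perm (Fin 5))) <;> omega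

theorem nat_card_stabilizer_sylow_five_perm_fin_five (P : Sylow 5 (Perm (Fin 5))) :
    Nat.card (stabilizer (Perm (Fin 5)) P) = 20 := by
  have := (stabilizer (Perm (Fin 5)) P).index_mul_card
  rw [index_stabilizer_of_transitive, nat_card_sylow_five_perm_fin_five,
    nat_card_perm_fin_five] at this
  omega

instance faithfulSMul_sylow_five_perm_fin_five :
    FaithfulSMul (Perm (Fin 5)) (Sylow 5 (Perm (Fin 5))) :=
  Perm.faithfulSMul_of_nat_card_stabilizer_lt (by simp) default
    (by rw [nat_card_stabilizer_sylow_five_perm_fin_five, nat_card_alternatingGroup_fin_five]; decide)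

/-- Every subgroup `H` of the symmetric group `S₆` that is isomorphic (as an abstract
group) to the symmetric group `S₅` either is the full stabilizer of a point of
`{1, …, 6}` (in particular it fixes that point), or acts transitively on `{1, …, 6}`;
moreover both cases occur: there is a point-stabilizer subgroup isomorphic to `S₅`, and
there is a transitive subgroup of `S₆` isomorphic to `S₅`. -/
theorem stmt5 :
    (∀ H : Subgroup (Equiv.Perm (Fin 6)), Nonempty (H ≃* Equiv.Perm (Fin 5)) →
      (∃ a : Fin 6, H = MulAction.stabilizer (Equiv.Perm (Fin 6)) a) ∨
      (∀ a b : Fin 6, ∃ h ∈ H, h a = b)) ∧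
    (∃ H : Subgroup (Equiv.Perm (Fin 6)), Nonempty (H ≃* Equiv.Perm (Fin 5)) ∧
      ∃ a : Fin 6, H = MulAction.stabilizer (Equiv.Perm (Fin 6)) a) ∧
    (∃ H : Subgroup (Equiv.Perm (Fin 6)), Nonempty (H ≃* Equiv.Perm (Fin 5)) ∧
      ∀ a b : Fin 6, ∃ h ∈ H, h a = b) := by
  refine ⟨fun H ⟨e⟩ => ?_, ?_, ?_⟩
  · have hH : Nat.card H = (Nat.card (Fin 6) - 1)! := by
      rw [Nat.card_congr e.toEquiv, Nat.card_perm]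
      simp
    refine (Perm.exists_eq_stabilizer_or_isPretransitive hH).imp_right fun htrans a b => ?_
    obtain ⟨⟨h, hh⟩, hab⟩ := htrans.exists_smul_eq a b
    exact ⟨h, hh, hab⟩
  · have e : {x : Fin 6 // x ≠ 0} ≃ Fin 5 := Finite.equivFinOfCardEq (by simp)
    exact ⟨_, ⟨(Perm.stabilizerMulEquiv 0).trans e.permCongrHom⟩, 0, rfl⟩
  · exact exists_transitive_subgroup_perm_mulEquiv
      (Finite.equivFinOfCardEq nat_card_sylow_five_perm_fin_five)
end

section
/- The symmetric group S₆ has an outer automorphism: there exists a group automorphism φ of S₆ such that for no element g of S₆ is φ equal to conjugation by g. -/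
/-!
Conjugation permutes the fifteen synthemes of `Fin 6` (products of three disjoint transpositions)
and hence the six synthematic totals (sets of five synthemes using every transposition once).
This gives a homomorphism `S₆ → S₆`. Its kernel is normal and misses an even permutation, so it
does not contain `A₆` and is therefore trivial. A transposition moves every total, so its image
has no fixed point, whereas an inner automorphism sends a transposition to a transposition.
-/

open Equiv Equiv.Perm Pointwise

namespace MulAction

variable {G β ι : Type*} [Group G] [MulAction G β] (t : ι → β)

def rangeSubMulAction (ht : ∀ (g : G) i, g • t i ∈ Set.range t) : SubMulAction G β where
  carrier := Set.range t
  smul_mem' g := by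
    rintro _ ⟨i, rfl⟩
    exact ht g i

noncomputable def toPermHomOfRange (ht_inj : Function.Injective t)
    (ht : ∀ (g : G) i, g • t i ∈ Set.range t) : G →* Perm ι :=
  (Equiv.ofInjective t ht_inj).symm.permCongrHom.toMonoidHom.comp
    (toPermHom G (rangeSubMulAction t ht))

theorem apply_toPermHomOfRange_apply (ht_inj : Function.Injective t)
    (ht : ∀ (g : G) i, g • t i ∈ Set.range t) (g : G) (i : ι) :
    t (toPermHomOfRange t ht_inj ht g i) = g • t i :=
  Equiv.apply_ofInjective_symm ht_inj _

end MulAction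

theorem Equiv.Perm.injective_of_map_ne_one {α G : Type*} [DecidableEq α] [Fintype α] [Group G]
    (hα : 5 ≤ Nat.card α) (f : Perm α →* G) {σ : Perm α} (hσ : σ ∈ alternatingGroup α)
    (hfσ : f σ ≠ 1) : Function.Injective f := by
  rw [← MonoidHom.ker_eq_bot_iff]
  by_contra hker
  have : Nontrivial f.ker := (Subgroup.nontrivial_iff_ne_bot _).mpr hker
  exact hfσ (alternatingGroup_le_of_normal hα this hσ)

theorem MulAut.ne_conj_of_forall_apply_swap_ne {α : Type*} [DecidableEq α]
    {φ : MulAut (Perm α)} {a b c : α} (hca : c ≠ a) (hcb : c ≠ b)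
    (hφ : ∀ x, φ (swap a b) x ≠ x) (g : Perm α) : φ ≠ MulAut.conj g := by
  rintro rfl
  apply hφ (g c)
  simp [MulAut.conj_apply, swap_apply_of_ne_of_ne hca hcb]

/-- `syntheme a b c d e f` is `(a b)(c d)(e f)`; each `synthematicTotal i` is one of the six
sets of five synthemes that together contain each of the fifteen transpositions once. -/
def syntheme (a b c d e f : Fin 6) : Perm (Fin 6) := swap a b * swap c d * swap e f

def synthematicTotal : Fin 6 → Finset (Perm (Fin 6))
  | 0 => {syntheme 0 1 2 3 4 5, syntheme 0 2 1 4 3 5, syntheme 0 3 1 5 2 4, syntheme 0 4 1 3 2 5,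
      syntheme 0 5 1 2 3 4}
  | 1 => {syntheme 0 1 2 3 4 5, syntheme 0 2 1 5 3 4, syntheme 0 3 1 4 2 5, syntheme 0 4 1 2 3 5,
      syntheme 0 5 1 3 2 4}
  | 2 => {syntheme 0 1 2 4 3 5, syntheme 0 2 1 3 4 5, syntheme 0 3 1 4 2 5, syntheme 0 4 1 5 2 3,
      syntheme 0 5 1 2 3 4}
  | 3 => {syntheme 0 1 2 4 3 5, syntheme 0 2 1 5 3 4, syntheme 0 3 1 2 4 5, syntheme 0 4 1 3 2 5,
      syntheme 0 5 1 4 2 3}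
  | 4 => {syntheme 0 1 2 5 3 4, syntheme 0 2 1 3 4 5, syntheme 0 3 1 5 2 4, syntheme 0 4 1 2 3 5,
      syntheme 0 5 1 4 2 3}
  | 5 => {syntheme 0 1 2 5 3 4, syntheme 0 2 1 4 3 5, syntheme 0 3 1 2 4 5, syntheme 0 4 1 5 2 3,
      syntheme 0 5 1 3 2 4}

namespace SynthematicTotal

open ConjAct

theorem injective : Function.Injective synthematicTotal := by
  decide

theorem swap_smul_mem_range :
    ∀ x y i : Fin 6, toConjAct (swap x y) • synthematicTotal i ∈ Set.range synthematicTotal := by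
  decide +kernel

theorem smul_mem_range (g : ConjAct (Perm (Fin 6))) (i : Fin 6) :
    g • synthematicTotal i ∈ Set.range synthematicTotal := by
  obtain ⟨σ, rfl⟩ := toConjAct.surjective g
  induction σ using Equiv.Perm.swap_induction_on generalizing i with
  | one => exact ⟨i, by simp⟩
  | swap_mul f x y _ ih =>
    obtain ⟨j, hj⟩ := ih i
    rw [map_mul, mul_smul, ← hj]
    exact swap_smul_mem_range x y j

noncomputable def permHom : Perm (Fin 6) →* Perm (Fin 6) :=
  (MulAction.toPermHomOfRange synthematicTotal injective smul_mem_range).comp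
    toConjAct.toMonoidHom

theorem apply_permHom_apply (σ : Perm (Fin 6)) (i : Fin 6) :
    synthematicTotal (permHom σ i) = toConjAct σ • synthematicTotal i :=
  MulAction.apply_toPermHomOfRange_apply _ injective smul_mem_range (toConjAct σ) i

theorem permHom_swap_apply_ne (i : Fin 6) : permHom (swap 0 1) i ≠ i := by
  rw [← injective.ne_iff, apply_permHom_apply]
  revert i
  decide

theorem permHom_injective : Function.Injective permHom := by
  refine injective_of_map_ne_one (by simp) permHom (σ := swap 0 1 * swap 1 2)
    (mul_mem_alternatingGroup_of_isSwap ⟨0, 1, by decide, rfl⟩ ⟨1, 2, by decide, rfl⟩) ?_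
  intro h
  have := apply_permHom_apply (swap 0 1 * swap 1 2) 0
  rw [h, Perm.one_apply] at this
  revert this
  decide

end SynthematicTotal

/-- The symmetric group `S₆` has an outer automorphism: there is a group automorphism
`φ` of `S₆` which is not equal to conjugation by any element `g` of `S₆`. -/
theorem stmt6 :
    ∃ φ : MulAut (Equiv.Perm (Fin 6)), ∀ g : Equiv.Perm (Fin 6), φ ≠ MulAut.conj g :=
  ⟨MulEquiv.ofBijective _ (Finite.injective_iff_bijective.mp SynthematicTotal.permHom_injective),
    MulAut.ne_conj_of_forall_apply_swap_ne (c := 2) (by decide) (by decide)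
      SynthematicTotal.permHom_swap_apply_ne⟩
end

section
/- There exists an injective group homomorphism from the alternating group A₅ into the symplectic group Sp₄(F₂) of 4×4 matrices over the field with two elements preserving the standard nondegenerate alternating bilinear form. -/
/-!
`S₅` permutes the coordinates of `𝔽₂⁵`, preserving the dot product and the hyperplane `W` of
vectors with coordinate sum zero. On `W` the dot product is alternating (`x ⬝ᵥ x = ∑ xᵢ² = ∑ xᵢ`),
and it has Gram matrix `J` in an explicit basis of `W`, so every permutation acts on `W` by a
symplectic `4 × 4` matrix. The action is faithful: a permutation moving `a` is detected by
`eₐ - e_c` for any third point `c`.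
-/

open Module Matrix

section SumZero

variable (R α : Type*) [CommRing R] [Fintype α]

def sumZero : Submodule R (α → R) :=
  LinearMap.ker (Fintype.linearCombination R fun _ : α => (1 : R))

variable {R α} in
lemma mem_sumZero {x : α → R} : x ∈ sumZero R α ↔ ∑ i, x i = 0 := by
  simp [sumZero, Fintype.linearCombination_apply]

lemma finrank_sumZero_add_one (K : Type*) [Field K] [Nonempty α] :
    finrank K (sumZero K α) + 1 = Fintype.card α := by
  classical
  rw [sumZero, Module.Dual.finrank_ker_add_one_of_ne_zero, finrank_fintype_fun_eq_card]
  intro h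
  have := congr($h (Pi.single (Classical.arbitrary α) 1))
  simp [Fintype.linearCombination_apply] at this

def sumZeroRep : Equiv.Perm α →* Module.End R (sumZero R α) where
  toFun σ := (LinearMap.funLeft R R σ.symm).restrict fun x hx => by
    rw [mem_sumZero] at hx ⊢
    simpa [LinearMap.funLeft_apply] using (Equiv.sum_comp σ.symm x).trans hx
  map_one' := rfl
  map_mul' _ _ := rfl

def sumZeroDotForm : LinearMap.BilinForm R (sumZero R α) :=
  LinearMap.BilinForm.restrict (dotProductBilin R R) (sumZero R α)

variable {R α}

@[simp]
lemma coe_sumZeroRep_apply (σ : Equiv.Perm α) (x : sumZero R α) :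
    (sumZeroRep R α σ x : α → R) = (x : α → R) ∘ σ.symm := rfl

@[simp]
lemma sumZeroDotForm_apply (x y : sumZero R α) :
    sumZeroDotForm R α x y = (x : α → R) ⬝ᵥ (y : α → R) := rfl

lemma sumZeroRep_injective [Nontrivial R] (hα : 3 ≤ Fintype.card α) :
    Function.Injective (sumZeroRep R α) := by
  classical
  rw [injective_iff_map_eq_one]
  intro σ hσ
  ext a
  by_contra hσa
  rw [Equiv.Perm.one_apply] at hσa
  obtain ⟨c, -, hc⟩ := Finset.exists_mem_notMem_of_card_lt_card
    (s := {a, σ a}) (t := Finset.univ) (Finset.card_le_two.trans_lt hα)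
  simp only [Finset.mem_insert, Finset.mem_singleton, not_or] at hc
  let x : sumZero R α := ⟨Pi.single a 1 - Pi.single c 1, by simp [mem_sumZero]⟩
  have hx := congr(($hσ x : α → R) (σ a))
  simp [x, Ne.symm hσa, Ne.symm hc.1, Ne.symm hc.2] at hx

lemma sumZeroDotForm_compl₁₂_sumZeroRep (σ : Equiv.Perm α) :
    (sumZeroDotForm R α).compl₁₂ (sumZeroRep R α σ) (sumZeroRep R α σ) = sumZeroDotForm R α := by
  ext x y
  simp [dotProduct_comp_equiv_symm, Function.comp_assoc]

end SumZero

lemma LinearMap.toMatrix_mem_symplecticGroup {l R M : Type*} [Fintype l] [DecidableEq l]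
    [CommRing R] [AddCommGroup M] [Module R M] (b : Basis (l ⊕ l) R M)
    {B : LinearMap.BilinForm R M} (hB : LinearMap.toMatrix₂ b b B = J l R)
    {f : Module.End R M} (hf : B.compl₁₂ f f = B) :
    LinearMap.toMatrix b b f ∈ symplecticGroup l R := by
  rw [SymplecticGroup.mem_iff', ← hB, ← LinearMap.toMatrix₂_compl₁₂, hf]

def symplecticFamily : Fin 2 ⊕ Fin 2 → Fin 5 → ZMod 2 :=
  Sum.elim ![![1, 1, 0, 0, 0], ![0, 0, 0, 1, 1]] ![![0, 1, 1, 0, 0], ![1, 1, 1, 1, 0]]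

lemma symplecticFamily_mem_sumZero (p : Fin 2 ⊕ Fin 2) :
    symplecticFamily p ∈ sumZero (ZMod 2) (Fin 5) := by
  rw [mem_sumZero]
  revert p
  decide

lemma linearIndependent_symplecticFamily : LinearIndependent (ZMod 2) symplecticFamily := by
  rw [Fintype.linearIndependent_iff]
  decide

lemma gram_symplecticFamily :
    (of fun p q => symplecticFamily p ⬝ᵥ symplecticFamily q) = J (Fin 2) (ZMod 2) := by
  decide

noncomputable def symplecticBasis :
    Basis (Fin 2 ⊕ Fin 2) (ZMod 2) (sumZero (ZMod 2) (Fin 5)) :=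
  basisOfLinearIndependentOfCardEqFinrank
    (b := fun p => ⟨symplecticFamily p, symplecticFamily_mem_sumZero p⟩)
    (.of_comp (sumZero _ _).subtype linearIndependent_symplecticFamily)
    (by
      have := finrank_sumZero_add_one (Fin 5) (ZMod 2)
      rw [Fintype.card_fin] at this
      rw [Fintype.card_sum, Fintype.card_fin]
      omega)

lemma toMatrix₂_symplecticBasis :
    LinearMap.toMatrix₂ symplecticBasis symplecticBasis (sumZeroDotForm (ZMod 2) (Fin 5)) =
      J (Fin 2) (ZMod 2) := by
  rw [← gram_symplecticFamily]
  ext p q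
  simp [LinearMap.toMatrix₂_apply, symplecticBasis]

noncomputable def permFinFiveToSymplecticGroup :
    Equiv.Perm (Fin 5) →* symplecticGroup (Fin 2) (ZMod 2) :=
  ((LinearMap.toMatrixAlgEquiv symplecticBasis).toMonoidHom.comp (sumZeroRep _ _)).codRestrict _
    fun σ => LinearMap.toMatrix_mem_symplecticGroup symplecticBasis toMatrix₂_symplecticBasis
      (sumZeroDotForm_compl₁₂_sumZeroRep σ)

lemma permFinFiveToSymplecticGroup_injective :
    Function.Injective permFinFiveToSymplecticGroup :=
  fun _ _ h => sumZeroRep_injective (by simp) <|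
    (LinearMap.toMatrixAlgEquiv symplecticBasis).injective (congrArg Subtype.val h)

/-- There is an injective group homomorphism from the alternating group `A₅` into the
symplectic group `Sp₄(𝔽₂)` of `4 × 4` matrices over the field with two elements
preserving the standard nondegenerate alternating bilinear form. -/
theorem stmt12 :
    ∃ f : alternatingGroup (Fin 5) →* Matrix.symplecticGroup (Fin 2) (ZMod 2),
      Function.Injective f :=
  ⟨permFinFiveToSymplecticGroup.comp (alternatingGroup (Fin 5)).subtype,
    permFinFiveToSymplecticGroup_injective.comp Subtype.val_injective⟩
end
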